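/- arXiv:math/0604032 — 4 statements merged into one kernel-verified Lean document; each statement's English description precedes it below -/
import Mathlib

section
/- Let (R, m) be a commutative noetherian local ring and let M be an arbitrary R-module. Then every associated prime of M is attached to the Matlis dual of M, i.e. Ass_R(M) ⊆ Att_R(D(M)). -/
/-- `attachedPrimes R M` is the set of prime ideals `p` of `R` attached to the `R`-module `M`,
i.e. such that `p` is the annihilator of some quotient of `M`. -/
def attachedPrimes (R : Type*) [CommRing R] (M : Type*) [AddCommGroup M] [Module R M] :
    Set (Ideal R) :=
  {p | p.IsPrime ∧ ∃ U : Submodule R M, p = Module.annihilator R (M ⧸ U)}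

/-!
If `p = Ann(x)` is an associated prime of `M`, then `r ↦ r • x` embeds `R ⧸ p` into `M`, and since
`E` is injective, restriction along this embedding maps `D(M)` onto `Hom(R ⧸ p, E)`; so it suffices
that `Hom(R ⧸ p, E)` has annihilator exactly `p`. For `r ∉ p`, multiplication by `r` is injective
on the domain `R ⧸ p`, so the map `R ⧸ p → E` sending `1` to the nonzero element `f 1` (killed by
`m ⊇ p`) extends along it to some `h` with `(r • h) 1 = f 1 ≠ 0`.
-/

universe u v w

variable {R : Type u} [CommRing R]

theorem mem_attachedPrimes_of_surjective {M N : Type*} [AddCommGroup M] [Module R M]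
    [AddCommGroup N] [Module R N] {p : Ideal R} (hp : p.IsPrime) (g : M →ₗ[R] N)
    (hg : Function.Surjective g) (hann : Module.annihilator R N = p) :
    p ∈ attachedPrimes R M :=
  ⟨hp, LinearMap.ker g, by rw [(g.quotKerEquivOfSurjective hg).annihilator_eq, hann]⟩

theorem LinearMap.lcomp_surjective_of_injective {N P : Type v} {E : Type w} [AddCommGroup N]
    [Module R N] [AddCommGroup P] [Module R P] [AddCommGroup E] [Module R E] [Small.{w} R]
    [Module.Injective R E] (i : N →ₗ[R] P) (hi : Function.Injective i) :
    Function.Surjective (LinearMap.lcomp R E i) :=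
  fun g ↦ Module.Injective.extension_property R E N P i hi g

variable (R) in
theorem Module.annihilator_le_annihilator_linearMap (N E : Type*) [AddCommGroup N] [Module R N]
    [AddCommGroup E] [Module R E] :
    Module.annihilator R N ≤ Module.annihilator R (N →ₗ[R] E) := fun r hr ↦
  Module.mem_annihilator.2 fun φ ↦ LinearMap.ext fun n ↦ by
    rw [LinearMap.smul_apply, ← map_smul, Module.mem_annihilator.1 hr n, map_zero,
      LinearMap.zero_apply]

theorem annihilator_linearMap_quotient_eq {E : Type w} [AddCommGroup E] [Module R E]
    [Small.{w} R] [Module.Injective R E] {p : Ideal R} [p.IsPrime] {e : E} (he : e ≠ 0)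
    (hpe : p ≤ Ideal.torsionOf R E e) :
    Module.annihilator R ((R ⧸ p) →ₗ[R] E) = p := by
  refine le_antisymm (fun r hr ↦ ?_) ?_
  · by_contra hrp
    have hμ : Function.Injective (r • LinearMap.id : (R ⧸ p) →ₗ[R] (R ⧸ p)) := fun y z hyz ↦ by
      simp only [LinearMap.smul_apply, LinearMap.id_apply] at hyz
      rw [Algebra.smul_def, Algebra.smul_def] at hyz
      exact mul_right_injective₀ (by rwa [ne_eq, Ideal.Quotient.algebraMap_eq,
        Ideal.Quotient.eq_zero_iff_mem]) hyz
    let g : (R ⧸ p) →ₗ[R] E := p.liftQ (LinearMap.toSpanSingleton R E e) hpe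
    obtain ⟨h, hh⟩ := Module.Injective.extension_property R E _ _ _ hμ g
    apply he
    calc e = g 1 := (one_smul R e).symm
      _ = h (r • 1) := by rw [← hh]; rfl
      _ = (r • h) 1 := by rw [map_smul, LinearMap.smul_apply]
      _ = 0 := by rw [Module.mem_annihilator.1 hr h, LinearMap.zero_apply]
  · simpa only [Ideal.annihilator_quotient] using
      Module.annihilator_le_annihilator_linearMap R (R ⧸ p) E

theorem stmt0_general (R : Type) [CommRing R] [IsNoetherianRing R] [IsLocalRing R]
    (M : Type) [AddCommGroup M] [Module R M]
    -- `E` is an injective hull of the residue field `R ⧸ m`: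
    (E : Type) [AddCommGroup E] [Module R E] (hE : Module.Injective R E)
    (f : (R ⧸ IsLocalRing.maximalIdeal R) →ₗ[R] E) (hf : Function.Injective f) :
    associatedPrimes R M ⊆ attachedPrimes R (M →ₗ[R] E) := by
  intro p hpM
  obtain ⟨hp, i, hi⟩ := (isAssociatedPrime_iff_exists_injective_linearMap p M).1 hpM
  have hf1 : f 1 ≠ 0 := (map_ne_zero_iff f hf).2 one_ne_zero
  have hpf1 : p ≤ Ideal.torsionOf R E (f 1) := fun r hr ↦ by
    rw [Ideal.mem_torsionOf_iff, ← map_smul, Algebra.smul_def, mul_one,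
      Ideal.Quotient.algebraMap_eq, Ideal.Quotient.eq_zero_iff_mem.2
        (IsLocalRing.le_maximalIdeal hp.ne_top hr), map_zero]
  exact mem_attachedPrimes_of_surjective hp (LinearMap.lcomp R E i)
    (LinearMap.lcomp_surjective_of_injective i hi) (annihilator_linearMap_quotient_eq hf1 hpf1)

/-- over a noetherian local ring, `Ass_R(M) ⊆ Att_R(D(M))`, where
`D(M) = Hom_R(M, E)` is the Matlis dual with respect to an injective hull `E` of `R/m`. -/
theorem stmt0 (R : Type) [CommRing R] [IsNoetherianRing R] [IsLocalRing R]
    (M : Type) [AddCommGroup M] [Module R M]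
    -- `E` is an injective hull of the residue field `R ⧸ m`:
    (E : Type) [AddCommGroup E] [Module R E] (hE : Module.Injective R E)
    (f : (R ⧸ IsLocalRing.maximalIdeal R) →ₗ[R] E) (hf : Function.Injective f)
    (hess : ∀ U : Submodule R E, U ≠ ⊥ → U ⊓ LinearMap.range f ≠ ⊥) :
    associatedPrimes R M ⊆ attachedPrimes R (M →ₗ[R] E) :=
  stmt0_general R M E hE f hf
end

section
/- Let (R, m) be a commutative noetherian local ring and let M be an arbitrary R-module. Then the primes maximal (with respect to inclusion) in Ass_R(D(M)) are exactly the primes maximal in Att_R(M): a prime ideal p is a maximal element of the set Ass_R(D(M)) if and only if p is a maximal element of the set Att_R(M). -/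
universe v

theorem maximal_iff_maximal_of_le_of_forall_exists_le {α : Type*} [PartialOrder α]
    {P Q : α → Prop} (hPQ : P ≤ Q) (hQP : ∀ y, Q y → ∃ z, P z ∧ y ≤ z) {x : α} :
    Maximal P x ↔ Maximal Q x := by
  refine ⟨fun hx => ⟨hPQ x hx.prop, fun y hy hxy => ?_⟩, fun hx => ?_⟩
  · obtain ⟨z, hz, hyz⟩ := hQP y hy
    exact hyz.trans (hx.le_of_ge hz (hxy.trans hyz))
  · obtain ⟨z, hz, hxz⟩ := hQP x hx.prop
    obtain rfl : x = z := hxz.antisymm (hx.le_of_ge (hPQ z hz) hxz)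
    exact hx.mono hPQ hz

namespace LinearMap

variable {R M N : Type*} [CommRing R] [AddCommGroup M] [Module R M] [AddCommGroup N] [Module R N]

theorem colon_bot_singleton_eq_annihilator_quotient_ker (φ : M →ₗ[R] N) :
    (⊥ : Submodule R (M →ₗ[R] N)).colon {φ} = Module.annihilator R (M ⧸ ker φ) := by
  ext r
  simp only [Submodule.mem_colon_singleton, Submodule.mem_bot, Module.mem_annihilator,
    (Submodule.mkQ_surjective _).forall, Submodule.mkQ_apply, ← Submodule.Quotient.mk_smul,
    Submodule.Quotient.mk_eq_zero, mem_ker, map_smul, LinearMap.ext_iff, smul_apply, zero_apply]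

end LinearMap

section Cogenerator

variable {R : Type*} [CommRing R] [IsLocalRing R] {E : Type v} [AddCommGroup E] [Module R E]

theorem exists_linearMap_apply_ne_zero_of_injective (hE : Module.Injective R E)
    (f : (R ⧸ IsLocalRing.maximalIdeal R) →ₗ[R] E) (hf : Function.Injective f)
    {N : Type v} [AddCommGroup N] [Module R N] {x : N} (hx : x ≠ 0) :
    ∃ φ : N →ₗ[R] E, φ x ≠ 0 := by
  have htors : Ideal.torsionOf R N x ≤ IsLocalRing.maximalIdeal R :=
    IsLocalRing.le_maximalIdeal fun h => hx (by simpa using (Ideal.eq_top_iff_one _).mp h)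
  let e := Ideal.quotTorsionOfEquivSpanSingleton R N x
  obtain ⟨φ, hφ⟩ := hE.out (R ∙ x).subtype (Submodule.injective_subtype _)
    (f ∘ₗ Submodule.factor htors ∘ₗ e.symm.toLinearMap)
  have he : e.symm ⟨x, Submodule.mem_span_singleton_self x⟩ = Submodule.Quotient.mk 1 := by
    rw [LinearEquiv.symm_apply_eq, Ideal.quotTorsionOfEquivSpanSingleton_apply_mk, one_smul]
  have hφx : φ x = f 1 := by simpa [he] using hφ ⟨x, Submodule.mem_span_singleton_self x⟩
  exact ⟨φ, hφx ▸ (map_ne_zero_iff f hf).mpr one_ne_zero⟩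

end Cogenerator

section AttachedPrimes

variable {R : Type*} [CommRing R]

theorem mem_attachedPrimes_of_mem_associatedPrimes_linearMap [IsNoetherianRing R]
    {M : Type*} [AddCommGroup M] [Module R M] {N : Type*} [AddCommGroup N] [Module R N] {p : Ideal R}
    (hp : p ∈ associatedPrimes R (M →ₗ[R] N)) : p ∈ attachedPrimes R M := by
  obtain ⟨hprime, φ, rfl⟩ := isAssociatedPrime_iff.mp hp
  exact ⟨hprime, LinearMap.ker φ, φ.colon_bot_singleton_eq_annihilator_quotient_ker⟩

theorem exists_mem_associatedPrimes_linearMap_le [IsNoetherianRing R] [IsLocalRing R]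
    {M : Type v} [AddCommGroup M] [Module R M] {E : Type v} [AddCommGroup E] [Module R E] (hE : Module.Injective R E)
    (f : (R ⧸ IsLocalRing.maximalIdeal R) →ₗ[R] E) (hf : Function.Injective f)
    {p : Ideal R} (hp : p ∈ attachedPrimes R M) :
    ∃ q ∈ associatedPrimes R (M →ₗ[R] E), p ≤ q := by
  obtain ⟨hprime, U, rfl⟩ := hp
  obtain ⟨n, hn⟩ : ∃ n : M ⧸ U, n ≠ 0 := by
    by_contra! h
    exact hprime.ne_top (Module.annihilator_eq_top_iff.mpr ⟨fun a b => (h a).trans (h b).symm⟩)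
  obtain ⟨ψ, hψ⟩ := exists_linearMap_apply_ne_zero_of_injective hE f hf hn
  set χ := ψ ∘ₗ U.mkQ
  have hχ : χ ≠ 0 := by
    obtain ⟨m, rfl⟩ := U.mkQ_surjective n
    exact fun h => hψ (LinearMap.congr_fun h m)
  have hU : U ≤ LinearMap.ker χ := fun m hm => by
    simp [χ, (Submodule.Quotient.mk_eq_zero U).mpr hm]
  obtain ⟨q, hq, hχq⟩ := exists_le_isAssociatedPrime_of_isNoetherianRing R χ hχ
  refine ⟨q, hq, le_trans ?_ hχq⟩
  rw [χ.colon_bot_singleton_eq_annihilator_quotient_ker]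
  exact (Submodule.factor hU).annihilator_le_of_surjective (Submodule.factor_surjective hU)

end AttachedPrimes

theorem stmt2_general (R : Type) [CommRing R] [IsNoetherianRing R] [IsLocalRing R]
    (M : Type) [AddCommGroup M] [Module R M]
    -- `E` is an injective hull of the residue field `R ⧸ m`:
    (E : Type) [AddCommGroup E] [Module R E] (hE : Module.Injective R E)
    (f : (R ⧸ IsLocalRing.maximalIdeal R) →ₗ[R] E) (hf : Function.Injective f)
    (p : Ideal R) :
    (p ∈ associatedPrimes R (M →ₗ[R] E) ∧
        ∀ q ∈ associatedPrimes R (M →ₗ[R] E), p ≤ q → p = q) ↔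
      (p ∈ attachedPrimes R M ∧ ∀ q ∈ attachedPrimes R M, p ≤ q → p = q) := by
  have := maximal_iff_maximal_of_le_of_forall_exists_le (x := p)
    (fun _ => mem_attachedPrimes_of_mem_associatedPrimes_linearMap (M := M) (N := E))
    (fun _ => exists_mem_associatedPrimes_linearMap_le hE f hf)
  rwa [maximal_iff, maximal_iff] at this

/-- over a noetherian local ring, the maximal elements of `Ass_R(D(M))` and of
`Att_R(M)` coincide, where `D(M) = Hom_R(M, E)` is the Matlis dual with respect to an
injective hull `E` of `R/m`. -/
theorem stmt2 (R : Type) [CommRing R] [IsNoetherianRing R] [IsLocalRing R]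
    (M : Type) [AddCommGroup M] [Module R M]
    -- `E` is an injective hull of the residue field `R ⧸ m`:
    (E : Type) [AddCommGroup E] [Module R E] (hE : Module.Injective R E)
    (f : (R ⧸ IsLocalRing.maximalIdeal R) →ₗ[R] E) (hf : Function.Injective f)
    (hess : ∀ U : Submodule R E, U ≠ ⊥ → U ⊓ LinearMap.range f ≠ ⊥)
    (p : Ideal R) :
    (p ∈ associatedPrimes R (M →ₗ[R] E) ∧
        ∀ q ∈ associatedPrimes R (M →ₗ[R] E), p ≤ q → p = q) ↔
      (p ∈ attachedPrimes R M ∧ ∀ q ∈ attachedPrimes R M, p ≤ q → p = q) :=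
  stmt2_general R M E hE f hf p
end

section
/- Let (R, m) be a commutative noetherian local ring and let M be an R-module. Suppose (p_i)_{i ∈ ℕ} is a sequence of prime ideals each attached to M, and suppose that the intersection q := ⋂_{i ∈ ℕ} p_i is a prime ideal of R. Then q is attached to M, i.e. q ∈ Att_R(M). -/
theorem Submodule.annihilator_quotient_iInf {R M ι : Type*} [Ring R] [AddCommGroup M]
    [Module R M] (U : ι → Submodule R M) :
    Module.annihilator R (M ⧸ ⨅ i, U i) = ⨅ i, Module.annihilator R (M ⧸ U i) := by
  simp only [Submodule.annihilator_quotient, Submodule.iInf_colon]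

theorem stmt3_general (R : Type*) [CommRing R]
    (M : Type*) [AddCommGroup M] [Module R M]
    (p : ℕ → Ideal R) (hp : ∀ i, p i ∈ attachedPrimes R M)
    (hq : (⨅ i, p i).IsPrime) :
    (⨅ i, p i) ∈ attachedPrimes R M := by
  choose _ U hU using hp
  exact ⟨hq, ⨅ i, U i, by simp only [hU, Submodule.annihilator_quotient_iInf]⟩

/-- over a noetherian local ring, if `(p i)` is a sequence of primes attached to
`M` whose intersection `q = ⋂ i, p i` is prime, then `q` is attached to `M`. -/
theorem stmt3 (R : Type*) [CommRing R] [IsNoetherianRing R] [IsLocalRing R]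
    (M : Type*) [AddCommGroup M] [Module R M]
    (p : ℕ → Ideal R) (hp : ∀ i, p i ∈ attachedPrimes R M)
    (hq : (⨅ i, p i).IsPrime) :
    (⨅ i, p i) ∈ attachedPrimes R M :=
  stmt3_general R M p hp hq
end

section
/- Let (R, m) be a commutative noetherian local ring and let M be an artinian R-module. Then the set of attached primes of M equals the set of associated primes of its Matlis dual: Att_R(M) = Ass_R(D(M)). -/
/-! An element `Φ` of `D(M)` has the same annihilator as `M ⧸ ker Φ`, so `Ass(D(M)) ⊆ Att(M)`.
Conversely let `p = Ann(N)` be prime, `N = M ⧸ U`. As `N` is artinian, some `r₀ N` with `r₀ ∉ p`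
is minimal among such submodules, hence `r₀ N = r r₀ N` for all `r ∉ p`: any `x ≠ 0` in `r₀ N` is
divisible by every `r ∉ p`. Since `E` is injective and contains `R ⧸ m`, some `φ : N → E` has
`φ x ≠ 0`, which forces `Ann(φ) = p`; precomposing with `M → N` gives `p ∈ Ass(D(M))`. -/

open Submodule

universe v

section

variable {R : Type*} [CommRing R] {N : Type*} [AddCommGroup N] [Module R N]

theorem annihilator_quotient_ker_eq_colon {M E : Type*} [AddCommGroup M] [Module R M]
    [AddCommGroup E] [Module R E] (Φ : M →ₗ[R] E) :
    Module.annihilator R (M ⧸ LinearMap.ker Φ) = colon ⊥ {Φ} := by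
  ext r
  rw [mem_colon_singleton, mem_bot, Module.mem_annihilator,
    (LinearMap.ker Φ).mkQ_surjective.forall, LinearMap.ext_iff]
  simp only [mkQ_apply, ← Quotient.mk_smul, Quotient.mk_eq_zero, LinearMap.mem_ker, map_smul,
    LinearMap.smul_apply, LinearMap.zero_apply]

theorem IsArtinian.exists_ne_zero_forall_exists_smul_eq [IsArtinian R N] {p : Ideal R}
    (hp : p.IsPrime) (hann : Module.annihilator R N ≤ p) :
    ∃ x : N, x ≠ 0 ∧ ∀ r ∉ p, ∃ z : N, r • z = x := by
  obtain ⟨_, ⟨r₀, hr₀, rfl⟩, hmin⟩ := IsArtinian.set_has_minimal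
    {Q : Submodule R N | ∃ r ∉ p, Q = LinearMap.range (LinearMap.lsmul R N r)}
    ⟨_, 1, p.one_notMem, rfl⟩
  have hdiv (r : R) (hr : r ∉ p) :
      LinearMap.range (LinearMap.lsmul R N r₀) ≤
        LinearMap.range (LinearMap.lsmul R N (r * r₀)) := by
    have hle : LinearMap.range (LinearMap.lsmul R N (r * r₀)) ≤
        LinearMap.range (LinearMap.lsmul R N r₀) := by
      rintro _ ⟨n, rfl⟩
      exact ⟨r • n, by simp only [LinearMap.lsmul_apply, mul_smul, smul_comm r₀ r]⟩
    exact (hle.lt_or_eq.resolve_left (hmin _ ⟨r * r₀, hp.mul_notMem hr hr₀, rfl⟩)).ge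
  obtain ⟨n₀, hn₀⟩ : ∃ n : N, r₀ • n ≠ 0 := by
    simpa [Module.mem_annihilator] using mt (@hann r₀) hr₀
  refine ⟨r₀ • n₀, hn₀, fun r hr => ?_⟩
  obtain ⟨y, hy⟩ := hdiv r hr ⟨n₀, rfl⟩
  exact ⟨r₀ • y, by simpa [mul_smul] using hy⟩

variable [IsLocalRing R] {E : Type v} [AddCommGroup E] [Module R E] [Small.{v} R]
  [Module.Injective R E]

theorem IsLocalRing.exists_linearMap_apply_ne_zero
    {f : (R ⧸ IsLocalRing.maximalIdeal R) →ₗ[R] E} (hf : Function.Injective f)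
    {x : N} (hx : x ≠ 0) : ∃ φ : N →ₗ[R] E, φ x ≠ 0 := by
  set I := LinearMap.ker (LinearMap.toSpanSingleton R N x)
  have hI : I ≠ ⊤ := fun h => hx (by simpa [I] using (Ideal.eq_top_iff_one I).1 h)
  have hIm : I ≤ LinearMap.ker (f ∘ₗ (IsLocalRing.maximalIdeal R).mkQ) := fun r hr => by
    simp [Ideal.Quotient.eq_zero_iff_mem.2 (IsLocalRing.le_maximalIdeal hI hr)]
  obtain ⟨φ, hφ⟩ := Module.Injective.extension_property R E (R ⧸ I) N
    (I.liftQ _ le_rfl) (LinearMap.ker_eq_bot.1 (ker_liftQ_eq_bot' I _ rfl))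
    (I.liftQ _ hIm)
  refine ⟨φ, fun h => ?_⟩
  have h1 := LinearMap.congr_fun hφ (Submodule.Quotient.mk 1)
  simp only [LinearMap.comp_apply, liftQ_apply, LinearMap.toSpanSingleton_apply, one_smul,
    mkQ_apply, h] at h1
  exact one_ne_zero ((map_eq_zero_iff f hf).1 h1.symm)

theorem isAssociatedPrime_annihilator_dual [IsArtinian R N]
    {f : (R ⧸ IsLocalRing.maximalIdeal R) →ₗ[R] E} (hf : Function.Injective f)
    (hp : (Module.annihilator R N).IsPrime) :
    IsAssociatedPrime (Module.annihilator R N) (N →ₗ[R] E) := by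
  obtain ⟨x, hx, hdiv⟩ := IsArtinian.exists_ne_zero_forall_exists_smul_eq hp le_rfl
  obtain ⟨φ, hφ⟩ := IsLocalRing.exists_linearMap_apply_ne_zero hf hx
  have hcolon : colon ⊥ {φ} = Module.annihilator R N := by
    ext r
    rw [mem_colon_singleton, mem_bot]
    refine ⟨fun hr => by_contra fun hrN => ?_, fun hr => ?_⟩
    · obtain ⟨z, rfl⟩ := hdiv r hrN
      exact hφ (by simpa using LinearMap.congr_fun hr z)
    · ext n
      rw [LinearMap.smul_apply, ← map_smul, Module.mem_annihilator.1 hr n, map_zero,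
        LinearMap.zero_apply]
  exact ⟨hp, φ, by rw [hcolon, hp.radical]⟩

end

theorem stmt4_general (R : Type) [CommRing R] [IsNoetherianRing R] [IsLocalRing R]
    (M : Type) [AddCommGroup M] [Module R M] [IsArtinian R M]
    -- `E` is an injective hull of the residue field `R ⧸ m`:
    (E : Type) [AddCommGroup E] [Module R E] (hE : Module.Injective R E)
    (f : (R ⧸ IsLocalRing.maximalIdeal R) →ₗ[R] E) (hf : Function.Injective f) :
    attachedPrimes R M = associatedPrimes R (M →ₗ[R] E) := by
  ext p
  constructor
  · rintro ⟨hp, U, rfl⟩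
    have := hE
    have hprecomp : Function.Injective (LinearMap.lcomp R E U.mkQ) := fun φ ψ h =>
      (LinearMap.cancel_right U.mkQ_surjective).1 h
    exact associatedPrimes.subset_of_injective hprecomp
      (isAssociatedPrime_annihilator_dual hf hp)
  · intro hp
    obtain ⟨hp, Φ, rfl⟩ := isAssociatedPrime_iff.1 hp
    exact ⟨hp, LinearMap.ker Φ, (annihilator_quotient_ker_eq_colon Φ).symm⟩

/-- over a noetherian local ring, for an artinian module `M`,
`Att_R(M) = Ass_R(D(M))`, where `D(M) = Hom_R(M, E)` is the Matlis dual with respect to an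
injective hull `E` of `R/m`. -/
theorem stmt4 (R : Type) [CommRing R] [IsNoetherianRing R] [IsLocalRing R]
    (M : Type) [AddCommGroup M] [Module R M] [IsArtinian R M]
    -- `E` is an injective hull of the residue field `R ⧸ m`:
    (E : Type) [AddCommGroup E] [Module R E] (hE : Module.Injective R E)
    (f : (R ⧸ IsLocalRing.maximalIdeal R) →ₗ[R] E) (hf : Function.Injective f)
    (hess : ∀ U : Submodule R E, U ≠ ⊥ → U ⊓ LinearMap.range f ≠ ⊥) :
    attachedPrimes R M = associatedPrimes R (M →ₗ[R] E) :=
  stmt4_general R M E hE f hf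
end
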